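/- arXiv:2301.03175 — 6 statements merged into one kernel-verified Lean document; each statement's English description precedes it below -/
import Mathlib

section
/- Let f be a proper closed convex function on ℝⁿ with minimizer x*, and suppose ‖x_0 − x*‖ ≤ R. Let x_i = prox_{α_i f}(x_{i−1}) for i = 1, ..., N with positive step sizes α_i. Then the vector g_N = (x_{N−1} − x_N)/α_N is a subgradient of f at x_N and satisfies ‖g_N‖ ≤ R / (α_1 + ... + α_N). -/
open scoped RealInnerProductSpace

/-- `g` is a subgradient of `f` at `y`. -/
def SubgradAt {n : ℕ} (f : EuclideanSpace ℝ (Fin n) → ℝ)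
    (g y : EuclideanSpace ℝ (Fin n)) : Prop :=
  ∀ z, f y + ⟪g, z - y⟫ ≤ f z

/-!
Write `gᵢ = (xᵢ₋₁ - xᵢ)/αᵢ` and `Sₖ = α₁ + ⋯ + αₖ`. The optimality condition of the proximal
step says `gᵢ ∈ ∂f(xᵢ)`. Testing this subgradient inequality against `x⋆` (distance decrease),
against `xᵢ₋₁` (function decrease) and combining it with the previous one through monotonicity
of `∂f` (`‖gᵢ₊₁‖ ≤ ‖gᵢ‖`) shows that the potential
`Φₖ = potential f x⋆ Sₖ gₖ xₖ = Sₖ² ‖gₖ‖² + ‖xₖ - x⋆‖² + 2 Sₖ (f xₖ - f x⋆)` never increases,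
while `Φ₁ ≤ ‖x₀ - x⋆‖²`.
Hence `S_N² ‖g_N‖² ≤ Φ_N ≤ R²`.
-/

open Filter Finset Topology

def potential {E : Type*} [NormedAddCommGroup E] (f : E → ℝ) (w : E) (S : ℝ) (g y : E) : ℝ :=
  S ^ 2 * ‖g‖ ^ 2 + ‖y - w‖ ^ 2 + 2 * S * (f y - f w)

lemma nonpos_of_forall_le_mul {c K : ℝ} (h : ∀ t, 0 < t → t ≤ 1 → c ≤ t * K) : c ≤ 0 := by
  have hlim : Tendsto (fun t => t * K) (𝓝[>] 0) (𝓝 0) :=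
    ((continuous_mul_const K).tendsto' 0 0 (zero_mul K)).mono_left nhdsWithin_le_nhds
  refine ge_of_tendsto hlim ?_
  filter_upwards [Ioc_mem_nhdsGT one_pos] with t ht using h t ht.1 ht.2

lemma norm_le_of_sq_le_inner {E : Type*} [NormedAddCommGroup E] [InnerProductSpace ℝ E]
    {u v : E} (h : ‖v‖ ^ 2 ≤ ⟪u, v⟫) : ‖v‖ ≤ ‖u‖ := by
  nlinarith [real_inner_le_norm u v, norm_nonneg u, norm_nonneg v]

section Subgradient

variable {n : ℕ} {f : EuclideanSpace ℝ (Fin n) → ℝ} {a : ℝ}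
  {g g' x y y' : EuclideanSpace ℝ (Fin n)}

theorem subgradAt_of_isMinOn_prox (hconv : ConvexOn ℝ Set.univ f) (ha : 0 < a)
    (hmin : IsMinOn (fun z => a * f z + ‖z - x‖ ^ 2 / 2) Set.univ y) :
    SubgradAt f (a⁻¹ • (x - y)) y := by
  intro z
  -- compare `y` with the points `(1 - t) • y + t • z` of the segment towards `z`
  have hsegment : ∀ t, 0 < t → t ≤ 1 →
      a * (f y - f z) + ⟪x - y, z - y⟫ ≤ t * (‖z - y‖ ^ 2 / 2) := by
    intro t ht ht1
    have hp : (1 - t) • y + t • z - x = t • (z - y) - (x - y) := by module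
    have hconvt : f ((1 - t) • y + t • z) ≤ (1 - t) * f y + t * f z :=
      hconv.2 (Set.mem_univ y) (Set.mem_univ z) (by linarith) ht.le (by ring)
    have hmin_t := isMinOn_iff.mp hmin ((1 - t) • y + t • z) (Set.mem_univ _)
    rw [hp, norm_sub_sq_real (t • (z - y)), norm_smul, real_inner_smul_left,
      Real.norm_of_nonneg ht.le, norm_sub_rev y x, real_inner_comm (x - y)] at hmin_t
    refine le_of_mul_le_mul_left ?_ ht
    nlinarith [mul_le_mul_of_nonneg_left hconvt ha.le]
  have hnonpos := nonpos_of_forall_le_mul hsegment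
  rw [real_inner_smul_left]
  have hscaled := (inv_mul_le_iff₀ ha).2 (show ⟪x - y, z - y⟫ ≤ a * (f z - f y) by linarith)
  linarith

theorem SubgradAt.inner_sub_nonneg (hg : SubgradAt f g y) (hg' : SubgradAt f g' y') :
    0 ≤ ⟪g - g', y - y'⟫ := by
  have h := hg y'
  have h' := hg' y
  rw [← neg_sub y y', inner_neg_right] at h
  rw [inner_sub_left]
  linarith

theorem SubgradAt.add_mul_norm_sq_le (hg' : SubgradAt f g' y') (hy : y - y' = a • g') :
    f y' + a * ‖g'‖ ^ 2 ≤ f y := by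
  have h := hg' y
  rwa [hy, real_inner_smul_right, real_inner_self_eq_norm_sq] at h

theorem SubgradAt.potential_le_norm_sub_sq (hg' : SubgradAt f g' y') (hy : y - y' = a • g')
    (ha : 0 ≤ a) (w : EuclideanSpace ℝ (Fin n)) : potential f w a g' y' ≤ ‖y - w‖ ^ 2 := by
  have hw := hg' w
  rw [← neg_sub y' w, inner_neg_right] at hw
  have hexpand : y - w = (y' - w) + a • g' := by rw [← hy]; abel
  rw [potential, hexpand, norm_add_sq_real, norm_smul, real_inner_smul_right, real_inner_comm,
    Real.norm_of_nonneg ha]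
  nlinarith

theorem SubgradAt.norm_le_of_sub_eq_smul (hg : SubgradAt f g y) (hg' : SubgradAt f g' y')
    (hy : y - y' = a • g') (ha : 0 < a) : ‖g'‖ ≤ ‖g‖ := by
  have hmono := hg.inner_sub_nonneg hg'
  rw [hy, real_inner_smul_right, inner_sub_left, real_inner_self_eq_norm_sq] at hmono
  exact norm_le_of_sq_le_inner (by nlinarith)

theorem SubgradAt.potential_add_le (hg : SubgradAt f g y) (hg' : SubgradAt f g' y')
    (hy : y - y' = a • g') (ha : 0 < a) {S : ℝ} (hS : 0 ≤ S) (w : EuclideanSpace ℝ (Fin n)) :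
    potential f w (S + a) g' y' ≤ potential f w S g y := by
  have hdist := hg'.potential_le_norm_sub_sq hy ha.le w
  have hdescent := hg'.add_mul_norm_sq_le hy
  have hnorm := pow_le_pow_left₀ (norm_nonneg _) (hg.norm_le_of_sub_eq_smul hg' hy ha) 2
  unfold potential at hdist ⊢
  nlinarith [mul_le_mul_of_nonneg_left hnorm (sq_nonneg S),
    mul_le_mul_of_nonneg_left hdescent (by positivity : (0 : ℝ) ≤ 2 * S)]

end Subgradient

theorem potential_le_of_subgradAt_steps {n : ℕ} {f : EuclideanSpace ℝ (Fin n) → ℝ}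
    {α : ℕ → ℝ} {x : ℕ → EuclideanSpace ℝ (Fin n)} {N : ℕ} (hN : 1 ≤ N)
    (hα : ∀ i ∈ Icc 1 N, 0 < α i)
    (hsub : ∀ i ∈ Icc 1 N, SubgradAt f ((α i)⁻¹ • (x (i - 1) - x i)) (x i))
    (w : EuclideanSpace ℝ (Fin n)) :
    potential f w (∑ k ∈ Icc 1 N, α k) ((α N)⁻¹ • (x (N - 1) - x N)) (x N)
      ≤ ‖x 0 - w‖ ^ 2 := by
  have hstep : ∀ i ∈ Icc 1 N, x (i - 1) - x i = α i • (α i)⁻¹ • (x (i - 1) - x i) :=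
    fun i hi => (smul_inv_smul₀ (hα i hi).ne' _).symm
  induction N, hN using Nat.le_induction with
  | base =>
    have h1 : 1 ∈ Icc 1 1 := mem_Icc.2 ⟨le_rfl, le_rfl⟩
    simpa using (hsub 1 h1).potential_le_norm_sub_sq (hstep 1 h1) (hα 1 h1).le w
  | succ N hN ih =>
    have hsucc : N + 1 ∈ Icc 1 (N + 1) := mem_Icc.2 ⟨by omega, le_rfl⟩
    have hN' : N ∈ Icc 1 (N + 1) := mem_Icc.2 ⟨hN, N.le_succ⟩
    have hmono : Icc 1 N ⊆ Icc 1 (N + 1) := Icc_subset_Icc_right N.le_succ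
    rw [sum_Icc_succ_top (by omega)]
    refine le_trans ?_ (ih (fun i hi => hα i (hmono hi)) (fun i hi => hsub i (hmono hi))
      (fun i hi => hstep i (hmono hi)))
    exact (hsub N hN').potential_add_le (hsub (N + 1) hsucc) (hstep (N + 1) hsucc) (hα _ hsucc)
      (sum_nonneg fun i hi => (hα i (hmono hi)).le) w

theorem stmt3_general {n : ℕ} (f : EuclideanSpace ℝ (Fin n) → ℝ)
    (hconv : ConvexOn ℝ Set.univ f)
    (N : ℕ) (hN : 1 ≤ N) (α : ℕ → ℝ) (hα : ∀ i ∈ Finset.Icc 1 N, 0 < α i)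
    (xstar : EuclideanSpace ℝ (Fin n)) (hstar : ∀ z, f xstar ≤ f z)
    (R : ℝ)
    (x : ℕ → EuclideanSpace ℝ (Fin n)) (hx0 : ‖x 0 - xstar‖ ≤ R)
    (hiter : ∀ i ∈ Finset.Icc 1 N,
      IsMinOn (fun z => α i * f z + ‖z - x (i - 1)‖ ^ 2 / 2) Set.univ (x i)) :
    SubgradAt f ((α N)⁻¹ • (x (N - 1) - x N)) (x N) ∧
    ‖(α N)⁻¹ • (x (N - 1) - x N)‖ ≤ R / ∑ k ∈ Finset.Icc 1 N, α k := by
  have hsub : ∀ i ∈ Icc 1 N, SubgradAt f ((α i)⁻¹ • (x (i - 1) - x i)) (x i) :=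
    fun i hi => subgradAt_of_isMinOn_prox hconv (hα i hi) (hiter i hi)
  refine ⟨hsub N (mem_Icc.2 ⟨hN, le_rfl⟩), ?_⟩
  set S := ∑ k ∈ Icc 1 N, α k
  set G := ‖(α N)⁻¹ • (x (N - 1) - x N)‖
  have hS : 0 < S := sum_pos hα (nonempty_Icc.2 hN)
  have hbound : (S * G) ^ 2 ≤ R ^ 2 := calc
    (S * G) ^ 2 ≤ potential f xstar S ((α N)⁻¹ • (x (N - 1) - x N)) (x N) := by
      rw [potential]
      nlinarith [hstar (x N), sq_nonneg ‖x N - xstar‖]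
    _ ≤ ‖x 0 - xstar‖ ^ 2 := potential_le_of_subgradAt_steps hN hα hsub xstar
    _ ≤ R ^ 2 := pow_le_pow_left₀ (norm_nonneg _) hx0 2
  rw [le_div_iff₀ hS, mul_comm]
  exact (pow_le_pow_iff_left₀ (by positivity) ((norm_nonneg _).trans hx0) two_ne_zero).1 hbound

/-- Tight subgradient-norm bound for the proximal point algorithm
(Conjecture 4.2 of Taylor–Hendrickx–Glineur, Euclidean norm case). -/
theorem stmt3 {n : ℕ} (f : EuclideanSpace ℝ (Fin n) → ℝ)
    (hconv : ConvexOn ℝ Set.univ f) (hlsc : LowerSemicontinuous f)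
    (N : ℕ) (hN : 1 ≤ N) (α : ℕ → ℝ) (hα : ∀ i ∈ Finset.Icc 1 N, 0 < α i)
    (xstar : EuclideanSpace ℝ (Fin n)) (hstar : ∀ z, f xstar ≤ f z)
    (R : ℝ) (hR : 0 < R)
    (x : ℕ → EuclideanSpace ℝ (Fin n)) (hx0 : ‖x 0 - xstar‖ ≤ R)
    (hiter : ∀ i ∈ Finset.Icc 1 N,
      IsMinOn (fun z => α i * f z + ‖z - x (i - 1)‖ ^ 2 / 2) Set.univ (x i)) :
    SubgradAt f ((α N)⁻¹ • (x (N - 1) - x N)) (x N) ∧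
    ‖(α N)⁻¹ • (x (N - 1) - x N)‖ ≤ R / ∑ k ∈ Finset.Icc 1 N, α k :=
  stmt3_general f hconv N hN α hα xstar hstar R x hx0 hiter
end

section
/- Let B be a symmetric positive definite n×n matrix, f a proper closed convex function on ℝⁿ with minimizer x*, and ‖x_0 − x*‖_B ≤ R. Define x_i = argmin_y { α_i f(y) + ½‖y − x_{i−1}‖_B² } for positive step sizes α_i, i = 1, ..., N. Then g_N = B(x_{N−1} − x_N)/α_N is a subgradient of f at x_N and ‖g_N‖_{B^{-1}} ≤ R / (α_1 + ... + α_N). -/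
/-!
Optimality of the prox step makes `g_i = B(x_{i-1} - x_i)/α_i` a subgradient of `f` at `x_i`.
Writing `‖·‖` for `‖·‖_B` and `d_i = B⁻¹ g_i`, three one-step facts follow from the subgradient
inequality: `f(x_i) + α_i ‖d_i‖² ≤ f(x_{i-1})`, `‖d_{i+1}‖ ≤ ‖d_i‖`, and
`‖x_i - x*‖² + 2 α_i (f(x_i) - f(x*)) + α_i² ‖d_i‖² ≤ ‖x_{i-1} - x*‖²`.
With `A_k = α_1 + ⋯ + α_k` they make `A_k² ‖d_k‖² + 2 A_k (f(x_k) - f(x*)) + ‖x_k - x*‖²`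
nonincreasing, so `A_N² ‖g_N‖²_{B⁻¹} = A_N² ‖d_N‖² ≤ ‖x_0 - x*‖² ≤ R²`.
-/

open Matrix Finset Filter Topology

variable {ι : Type*} [Fintype ι]

namespace Matrix

theorem IsHermitian.mulVec_dotProduct_comm {B : Matrix ι ι ℝ} (hB : B.IsHermitian)
    (u v : ι → ℝ) : B *ᵥ u ⬝ᵥ v = B *ᵥ v ⬝ᵥ u := by
  rw [dotProduct_comm, dotProduct_mulVec, ← mulVec_transpose, isHermitian_iff_isSymm.mp hB]

theorem PosSemidef.mulVec_dotProduct_self_nonneg {B : Matrix ι ι ℝ} (hB : B.PosSemidef)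
    (v : ι → ℝ) : 0 ≤ B *ᵥ v ⬝ᵥ v := by
  simpa [dotProduct_comm] using hB.dotProduct_mulVec_nonneg v

theorem IsHermitian.mulVec_add_dotProduct_add {B : Matrix ι ι ℝ} (hB : B.IsHermitian)
    (u v : ι → ℝ) :
    B *ᵥ (u + v) ⬝ᵥ (u + v) = B *ᵥ u ⬝ᵥ u + 2 * (B *ᵥ u ⬝ᵥ v) + B *ᵥ v ⬝ᵥ v := by
  rw [mulVec_add, add_dotProduct, dotProduct_add, dotProduct_add, hB.mulVec_dotProduct_comm v u]
  ring

end Matrix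

theorem nonneg_of_forall_mem_Ioc_nonneg_add_mul {A c : ℝ}
    (h : ∀ t ∈ Set.Ioc (0 : ℝ) 1, 0 ≤ A + t * c) : 0 ≤ A := by
  have hlim : Tendsto (fun t : ℝ => A + t * c) (𝓝[>] 0) (𝓝 A) := by
    have hcont : Continuous fun t : ℝ => A + t * c := by fun_prop
    simpa using (hcont.tendsto 0).mono_left nhdsWithin_le_nhds
  exact ge_of_tendsto hlim (mem_of_superset (Ioc_mem_nhdsGT one_pos) h)

def IsSubgradient (f : (ι → ℝ) → ℝ) (y g : ι → ℝ) : Prop :=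
  ∀ z, f y + g ⬝ᵥ (z - y) ≤ f z

def IsProxStep (B : Matrix ι ι ℝ) (f : (ι → ℝ) → ℝ) (a : ℝ) (w y : ι → ℝ) : Prop :=
  IsMinOn (fun z => a * f z + (B *ᵥ (z - w) ⬝ᵥ (z - w)) / 2) Set.univ y

variable {B : Matrix ι ι ℝ} {f : (ι → ℝ) → ℝ}

theorem IsProxStep.isSubgradient (hB : B.PosSemidef) (hf : ConvexOn ℝ Set.univ f) {a : ℝ}
    (ha : 0 < a) {w y : ι → ℝ} (h : IsProxStep B f a w y) :
    IsSubgradient f y (B *ᵥ (a⁻¹ • (w - y))) := by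
  intro z
  set u := y - w
  set v := z - y
  -- Comparing `y` with `y + t • v` and letting `t → 0⁺` gives the first-order condition.
  have hfirst : 0 ≤ a * (f z - f y) + B *ᵥ u ⬝ᵥ v := by
    refine nonneg_of_forall_mem_Ioc_nonneg_add_mul (c := (B *ᵥ v ⬝ᵥ v) / 2) fun t ht => ?_
    have hconv : f (y + t • v) ≤ (1 - t) * f y + t * f z := by
      rw [show y + t • v = (1 - t) • y + t • z by simp only [v]; module]
      exact hf.2 (Set.mem_univ y) (Set.mem_univ z) (sub_nonneg.2 ht.2) ht.1.le (by ring)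
    have hmin : a * f y + (B *ᵥ u ⬝ᵥ u) / 2 ≤
        a * f (y + t • v) + (B *ᵥ (u + t • v) ⬝ᵥ (u + t • v)) / 2 := by
      simpa [u, add_sub_right_comm] using h (Set.mem_univ (y + t • v))
    have hexp := hB.isHermitian.mulVec_add_dotProduct_add u (t • v)
    simp only [mulVec_smul, dotProduct_smul, smul_dotProduct, smul_eq_mul] at hexp
    have : 0 ≤ t * (a * (f z - f y) + B *ᵥ u ⬝ᵥ v + t * ((B *ᵥ v ⬝ᵥ v) / 2)) := by
      nlinarith
    exact nonneg_of_mul_nonneg_right this ht.1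
  have hwy : w - y = -u := by simp [u]
  rw [hwy, smul_neg, mulVec_neg, neg_dotProduct, mulVec_smul, smul_dotProduct, smul_eq_mul]
  have := mul_le_mul_of_nonneg_left hfirst (inv_nonneg.mpr ha.le)
  rw [mul_add, ← mul_assoc, inv_mul_cancel₀ ha.ne', one_mul, mul_zero] at this
  linarith

section SubgradientStep

variable {a : ℝ} {w y d : ι → ℝ}

theorem IsSubgradient.apply_add_mul_le (hsub : IsSubgradient f y (B *ᵥ d))
    (hw : w = y + a • d) : f y + a * (B *ᵥ d ⬝ᵥ d) ≤ f w := by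
  simpa [hw, dotProduct_smul] using hsub w

theorem IsSubgradient.add_le_mulVec_dotProduct_self (hB : B.IsHermitian) (ha : 0 ≤ a)
    (hsub : IsSubgradient f y (B *ᵥ d)) (hw : w = y + a • d) (p : ι → ℝ) :
    B *ᵥ (y - p) ⬝ᵥ (y - p) + 2 * a * (f y - f p) + a ^ 2 * (B *ᵥ d ⬝ᵥ d) ≤
      B *ᵥ (w - p) ⬝ᵥ (w - p) := by
  have hp : f y - f p ≤ B *ᵥ d ⬝ᵥ (y - p) := by
    have := hsub p
    rw [← neg_sub y p, dotProduct_neg] at this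
    linarith
  have hexp := hB.mulVec_add_dotProduct_add (y - p) (a • d)
  rw [show y - p + a • d = w - p by rw [hw]; abel] at hexp
  simp only [mulVec_smul, dotProduct_smul, smul_dotProduct, smul_eq_mul,
    hB.mulVec_dotProduct_comm (y - p) d] at hexp
  nlinarith

-- Monotonicity of the subdifferential gives `⟪d, d'⟫_B ≥ ‖d'‖²_B`, and then
-- `0 ≤ ‖d - d'‖²_B` gives `‖d'‖_B ≤ ‖d‖_B`.
theorem IsSubgradient.mulVec_dotProduct_self_le (hB : B.PosSemidef) (ha : 0 < a) {y' d' : ι → ℝ}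
    (hsub : IsSubgradient f y (B *ᵥ d)) (hsub' : IsSubgradient f y' (B *ᵥ d'))
    (hy : y = y' + a • d') : B *ᵥ d' ⬝ᵥ d' ≤ B *ᵥ d ⬝ᵥ d := by
  have h := hsub y'
  have h' := hsub' y
  rw [show y' - y = -(a • d') by rw [hy]; abel] at h
  rw [show y - y' = a • d' by rw [hy]; abel] at h'
  simp only [dotProduct_neg, dotProduct_smul, smul_eq_mul] at h h'
  have hcross : B *ᵥ d' ⬝ᵥ d' ≤ B *ᵥ d ⬝ᵥ d' :=
    le_of_mul_le_mul_left (by linarith) ha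
  have hnn := hB.mulVec_dotProduct_self_nonneg (d - d')
  rw [mulVec_sub, sub_dotProduct, dotProduct_sub, dotProduct_sub,
    hB.isHermitian.mulVec_dotProduct_comm d' d] at hnn
  linarith

end SubgradientStep

theorem sq_sum_mul_le_of_descent {α F Q E : ℕ → ℝ} {N : ℕ}
    (hα : ∀ k < N, 0 ≤ α (k + 1))
    (hF : ∀ k < N, F (k + 1) + α (k + 1) * Q (k + 1) ≤ F k)
    (hQ : ∀ k, k + 1 < N → Q (k + 2) ≤ Q (k + 1))
    (hE : ∀ k < N, E (k + 1) + 2 * α (k + 1) * F (k + 1) + α (k + 1) ^ 2 * Q (k + 1) ≤ E k)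
    (hFN : 0 ≤ F N) (hEN : 0 ≤ E N) :
    (∑ i ∈ Icc 1 N, α i) ^ 2 * Q N ≤ E 0 := by
  set A : ℕ → ℝ := fun k => ∑ i ∈ Icc 1 k, α i
  have hA : ∀ k ≤ N, 0 ≤ A k := fun k hk =>
    sum_nonneg fun i hi => by
      obtain ⟨j, rfl⟩ : ∃ j, i = j + 1 := ⟨i - 1, by grind⟩
      exact hα j (by grind)
  -- Each step lowers the potential by at least `A k ^ 2 * (Q k - Q (k + 1)) ≥ 0`.
  have hpot : ∀ k ≤ N, A k ^ 2 * Q k + 2 * A k * F k + E k ≤ E 0 := by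
    intro k
    induction k with
    | zero => simp [A]
    | succ k ih =>
      intro hk
      have hAk : A (k + 1) = A k + α (k + 1) := sum_Icc_succ_top (by omega) α
      have hQk : A k ^ 2 * Q (k + 1) ≤ A k ^ 2 * Q k := by
        rcases k with _ | j
        · simp [A]
        · exact mul_le_mul_of_nonneg_left (hQ j (by omega)) (sq_nonneg _)
      rw [hAk]
      nlinarith [ih (by omega), hA k (by omega), hF k hk, hE k hk, hα k hk]
  nlinarith [hpot N le_rfl, hA N le_rfl]

theorem Real.sqrt_le_div_of_sq_mul_le {S Q E R : ℝ} (hS : 0 < S) (hQ : S ^ 2 * Q ≤ E)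
    (hE : √E ≤ R) : √Q ≤ R / S := by
  rw [le_div_iff₀ hS]
  calc √Q * S = √(S ^ 2 * Q) := by rw [Real.sqrt_mul (sq_nonneg S), Real.sqrt_sq hS.le, mul_comm]
    _ ≤ √E := Real.sqrt_le_sqrt hQ
    _ ≤ R := hE

theorem stmt4_general {n : ℕ} (B : Matrix (Fin n) (Fin n) ℝ) (hB : B.PosDef)
    (f : (Fin n → ℝ) → ℝ)
    (hconv : ConvexOn ℝ Set.univ f)
    (N : ℕ) (hN : 1 ≤ N) (α : ℕ → ℝ) (hα : ∀ i ∈ Finset.Icc 1 N, 0 < α i)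
    (xstar : Fin n → ℝ) (hstar : ∀ z, f xstar ≤ f z)
    (R : ℝ)
    (x : ℕ → Fin n → ℝ)
    (hx0 : Real.sqrt (B.mulVec (x 0 - xstar) ⬝ᵥ (x 0 - xstar)) ≤ R)
    (hiter : ∀ i ∈ Finset.Icc 1 N,
      IsMinOn (fun z => α i * f z + (B.mulVec (z - x (i - 1)) ⬝ᵥ (z - x (i - 1))) / 2)
        Set.univ (x i)) :
    (∀ z, f (x N) + ((α N)⁻¹ • B.mulVec (x (N - 1) - x N)) ⬝ᵥ (z - x N) ≤ f z) ∧
    Real.sqrt (((α N)⁻¹ • B.mulVec (x (N - 1) - x N)) ⬝ᵥ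
        B⁻¹.mulVec ((α N)⁻¹ • B.mulVec (x (N - 1) - x N)))
      ≤ R / ∑ k ∈ Finset.Icc 1 N, α k := by
  set d : ℕ → Fin n → ℝ := fun i => (α i)⁻¹ • (x (i - 1) - x i)
  have hα' : ∀ k < N, 0 < α (k + 1) := fun k hk => hα (k + 1) (by simp; omega)
  have hsub : ∀ k < N, IsSubgradient f (x (k + 1)) (B *ᵥ d (k + 1)) := fun k hk =>
    IsProxStep.isSubgradient hB.posSemidef hconv (hα' k hk) (hiter (k + 1) (by simp; omega))
  have hstep : ∀ k < N, x k = x (k + 1) + α (k + 1) • d (k + 1) := fun k hk => by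
    simp [d, smul_smul, mul_inv_cancel₀ (hα' k hk).ne']
  have hbound : (∑ k ∈ Icc 1 N, α k) ^ 2 * (B *ᵥ d N ⬝ᵥ d N) ≤
      B *ᵥ (x 0 - xstar) ⬝ᵥ (x 0 - xstar) :=
    sq_sum_mul_le_of_descent (F := fun k => f (x k) - f xstar)
      (Q := fun k => B *ᵥ d k ⬝ᵥ d k) (E := fun k => B *ᵥ (x k - xstar) ⬝ᵥ (x k - xstar))
      (fun k hk => (hα' k hk).le)
      (fun k hk => by linarith [(hsub k hk).apply_add_mul_le (hstep k hk)])
      (fun k hk => (hsub k (by omega)).mulVec_dotProduct_self_le hB.posSemidef (hα' (k + 1) hk)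
        (hsub (k + 1) hk) (hstep (k + 1) hk))
      (fun k hk => by
        linarith [(hsub k hk).add_le_mulVec_dotProduct_self hB.isHermitian (hα' k hk).le
          (hstep k hk) xstar])
      (sub_nonneg.2 (hstar _)) (hB.posSemidef.mulVec_dotProduct_self_nonneg _)
  have hg : (α N)⁻¹ • B *ᵥ (x (N - 1) - x N) = B *ᵥ d N := by simp [d, mulVec_smul]
  rw [hg, mulVec_mulVec, nonsing_inv_mul _ hB.det_pos.ne'.isUnit, one_mulVec]
  obtain ⟨M, rfl⟩ : ∃ M, N = M + 1 := ⟨N - 1, by omega⟩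
  exact ⟨hsub M (by omega), Real.sqrt_le_div_of_sq_mul_le (sum_pos hα ⟨M + 1, by simp⟩)
    hbound hx0⟩

/-- Subgradient-norm bound for the proximal point algorithm in the `B`-norm,
where `B` is symmetric positive definite: the subgradient
`g_N = B(x_{N-1} - x_N)/α_N ∈ ∂f(x_N)` satisfies
`‖g_N‖_{B⁻¹} ≤ R / (α_1 + ⋯ + α_N)`. -/
theorem stmt4 {n : ℕ} (B : Matrix (Fin n) (Fin n) ℝ) (hB : B.PosDef)
    (f : (Fin n → ℝ) → ℝ)
    (hconv : ConvexOn ℝ Set.univ f) (hlsc : LowerSemicontinuous f)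
    (N : ℕ) (hN : 1 ≤ N) (α : ℕ → ℝ) (hα : ∀ i ∈ Finset.Icc 1 N, 0 < α i)
    (xstar : Fin n → ℝ) (hstar : ∀ z, f xstar ≤ f z)
    (R : ℝ) (hR : 0 < R)
    (x : ℕ → Fin n → ℝ)
    (hx0 : Real.sqrt (B.mulVec (x 0 - xstar) ⬝ᵥ (x 0 - xstar)) ≤ R)
    (hiter : ∀ i ∈ Finset.Icc 1 N,
      IsMinOn (fun z => α i * f z + (B.mulVec (z - x (i - 1)) ⬝ᵥ (z - x (i - 1))) / 2)
        Set.univ (x i)) :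
    (∀ z, f (x N) + ((α N)⁻¹ • B.mulVec (x (N - 1) - x N)) ⬝ᵥ (z - x N) ≤ f z) ∧
    Real.sqrt (((α N)⁻¹ • B.mulVec (x (N - 1) - x N)) ⬝ᵥ
        B⁻¹.mulVec ((α N)⁻¹ • B.mulVec (x (N - 1) - x N)))
      ≤ R / ∑ k ∈ Finset.Icc 1 N, α k :=
  stmt4_general B hB f hconv N hN α hα xstar hstar R x hx0 hiter
end

section
/- For the one-dimensional function f(x) = R|x| / (2 Σ_{i=1}^N α_i) started at x_0 = −R, the final PPA iterate x_N satisfies f(x_N) − f(0) = R² / (4 Σ_{i=1}^N α_i), i.e., the function-value bound R²/(4 Σ α_i) is attained with equality. -/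
/-!
While the iterates stay in the negative half-line, the proximal step of `c|·|` with step `αᵢ` is
the shift `y ↦ y + c αᵢ`, so `x_i = x_0 + c (α_1 + ⋯ + α_i)`. With `x_0 = -R` and
`c = R / (2 Σ αᵢ)` the iterates never leave `[-R, -R/2]` and end at `x_N = -R/2`, where
`f(x_N) = R² / (4 Σ αᵢ)`.
-/

open Finset

/-- Completing the square: `a|y| + (y - p)²/2 ≥ -a y + (y - p)²/2 = ((y - p - a)² - a² - 2ap)/2`,
with equality at `y = p + a ≤ 0`. -/
lemma eq_add_of_isMinOn_abs_prox {a p z : ℝ} (ha : 0 ≤ a) (h : p + a ≤ 0)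
    (hz : IsMinOn (fun y => a * |y| + (y - p) ^ 2 / 2) Set.univ z) : z = p + a := by
  have hle : a * |z| + (z - p) ^ 2 / 2 ≤ a * |p + a| + (p + a - p) ^ 2 / 2 :=
    isMinOn_iff.mp hz (p + a) (Set.mem_univ _)
  rw [abs_of_nonpos h] at hle
  nlinarith [neg_le_abs z, sq_nonneg (z - p - a)]

lemma eq_add_mul_sum_of_isMinOn_prox_abs {N : ℕ} {α : ℕ → ℝ} (hα : ∀ i ∈ Icc 1 N, 0 ≤ α i)
    {c : ℝ} (hc : 0 ≤ c) {f : ℝ → ℝ} (hf : ∀ y, f y = c * |y|) {x : ℕ → ℝ}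
    (hend : x 0 + c * ∑ k ∈ Icc 1 N, α k ≤ 0)
    (hiter : ∀ i ∈ Icc 1 N,
      IsMinOn (fun y => α i * f y + (y - x (i - 1)) ^ 2 / 2) Set.univ (x i)) :
    ∀ i ≤ N, x i = x 0 + c * ∑ k ∈ Icc 1 i, α k := by
  intro i
  induction i with
  | zero => intro _; simp
  | succ j ih =>
    intro hj
    have hmem : j + 1 ∈ Icc 1 N := mem_Icc.mpr ⟨by omega, hj⟩
    have hsum : ∑ k ∈ Icc 1 (j + 1), α k = ∑ k ∈ Icc 1 j, α k + α (j + 1) :=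
      sum_Icc_succ_top (by omega) α
    have hpartial : ∑ k ∈ Icc 1 (j + 1), α k ≤ ∑ k ∈ Icc 1 N, α k :=
      sum_le_sum_of_subset_of_nonneg (Icc_subset_Icc_right hj) fun k hk _ => hα k hk
    have hmin : IsMinOn (fun y => α (j + 1) * c * |y| + (y - x j) ^ 2 / 2) Set.univ (x (j + 1)) := by
      simpa only [hf, Nat.add_sub_cancel, mul_assoc] using hiter (j + 1) hmem
    have hstay : x j + α (j + 1) * c ≤ 0 := by
      rw [ih (by omega)]
      nlinarith [mul_le_mul_of_nonneg_left hpartial hc]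
    rw [eq_add_of_isMinOn_abs_prox (mul_nonneg (hα _ hmem) hc) hstay hmin, ih (by omega), hsum]
    ring

/-- Tightness of the function-value bound: for the one-dimensional function
`f(x) = R|x|/(2 α_{1:N})` started at `x_0 = -R`, the final PPA iterate satisfies
`f(x_N) - f(0) = R²/(4 Σ α_i)`. -/
theorem stmt7 (N : ℕ) (hN : 1 ≤ N) (α : ℕ → ℝ)
    (hα : ∀ i ∈ Finset.Icc 1 N, 0 < α i)
    (R : ℝ) (hR : 0 < R) (f : ℝ → ℝ)
    (hf : ∀ y, f y = R * |y| / (2 * ∑ k ∈ Finset.Icc 1 N, α k))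
    (x : ℕ → ℝ) (hx0 : x 0 = -R)
    (hiter : ∀ i ∈ Finset.Icc 1 N,
      IsMinOn (fun y => α i * f y + (y - x (i - 1)) ^ 2 / 2) Set.univ (x i)) :
    f (x N) - f 0 = R ^ 2 / (4 * ∑ k ∈ Finset.Icc 1 N, α k) := by
  set S := ∑ k ∈ Icc 1 N, α k
  have hS : 0 < S := sum_pos hα ⟨1, mem_Icc.mpr ⟨le_rfl, hN⟩⟩
  have hf' : ∀ y, f y = R / (2 * S) * |y| := fun y => by rw [hf]; ring
  have hshift : R / (2 * S) * S = R / 2 := by field_simp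
  have hend : x 0 + R / (2 * S) * S ≤ 0 := by rw [hx0, hshift]; linarith
  have hxN : x N = -(R / 2) := by
    rw [eq_add_mul_sum_of_isMinOn_prox_abs (fun i hi => (hα i hi).le) (by positivity) hf' hend hiter N le_rfl,
      hx0, hshift]
    ring
  rw [hf', hf', hxN, abs_neg, abs_of_pos (half_pos hR), abs_zero]
  field_simp
  ring
end

section
/- Let N ≥ 2, let α_1, ..., α_N be positive reals with separator s = N (i.e., α_{1:N−1} ≤ α_N and thus α_N ≥ α_{1:N−1}), and let x_0, ..., x_N ∈ ℝⁿ. Then −‖(x_{N−1}−x_N)/α_N‖² + ‖x_0‖²/α_{1:N}² + (2(α_N − α_{1:N−1})/(α_{1:N}α_N))⟨(x_{N−1}−x_N)/α_N, −x_N⟩ + 2 Σ_{i=1}^{N−1}[ (α_i/(α_{i:N}α_{i+1:N}))⟨(x_{i−1}−x_i)/α_i, −x_i⟩ + (α_{1:i}/(α_{1:N}α_{i+1:N}))⟨(x_i−x_{i+1})/α_{i+1}, x_i−x_{i+1}⟩ ] equals ‖x_0/α_{1:N} − x_1/α_{2:N}‖² + Σ_{i=1}^{N−2} ((α_{i+1}α_{1:N}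 + 2α_{1:i}α_{i+2:N})/(α_{1:N}α_{i+1})) ‖x_i/α_{i+1:N} − x_{i+1}/α_{i+2:N}‖² + ((α_N − α_{1:N−1})/(α_{1:N}α_N²)) ‖x_N‖², and in particular this quantity is nonnegative. -/
/-! Write `α_{i:j}` for `∑_{k=i}^{j} α_k`. Every summand on the left couples only consecutive
points. Grouping the second summand at index `i` with the first one at index `i + 1`, the pair
`(x_i, x_{i+1})` contributes exactly the `i`-th square on the right plus the telescoping difference
`w_i ‖x_i‖² - w_{i+1} ‖x_{i+1}‖²`, where `w_i = 1 / α_{i+1:N}² - 2 / (α_{1:N} α_{i+1:N})`.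
The leftover pieces at the two ends complete to `‖x_0 / α_{1:N} - x_1 / α_{2:N}‖²` and to the
multiple of `‖x_N‖²`, whose coefficient is nonnegative precisely by the separator condition
`α_{1:N-1} ≤ α_N`. -/

open scoped RealInnerProductSpace
open Finset

section InnerProductIdentities

variable {E : Type*} [NormedAddCommGroup E] [InnerProductSpace ℝ E]

theorem norm_smul_sub_smul_sq_real (r s : ℝ) (u v : E) :
    ‖r • u - s • v‖ ^ 2 = r ^ 2 * ‖u‖ ^ 2 - 2 * (r * s) * ⟪u, v⟫ + s ^ 2 * ‖v‖ ^ 2 := by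
  rw [norm_sub_sq_real, norm_smul, norm_smul, real_inner_smul_left, real_inner_smul_right,
    mul_pow, mul_pow, Real.norm_eq_abs, Real.norm_eq_abs, sq_abs, sq_abs]
  ring

theorem norm_smul_sub_sq_real (r : ℝ) (u v : E) :
    ‖r • (u - v)‖ ^ 2 = r ^ 2 * (‖u‖ ^ 2 - 2 * ⟪u, v⟫ + ‖v‖ ^ 2) := by
  rw [norm_smul, mul_pow, Real.norm_eq_abs, sq_abs, norm_sub_sq_real]

theorem real_inner_smul_sub_neg (r : ℝ) (u v : E) :
    ⟪r • (u - v), -v⟫ = r * (‖v‖ ^ 2 - ⟪u, v⟫) := by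
  rw [real_inner_smul_left, inner_neg_right, inner_sub_left, real_inner_self_eq_norm_sq]
  ring

theorem real_inner_smul_sub_sub (r : ℝ) (u v : E) :
    ⟪r • (u - v), u - v⟫ = r * (‖u‖ ^ 2 - 2 * ⟪u, v⟫ + ‖v‖ ^ 2) := by
  rw [real_inner_smul_left, real_inner_self_eq_norm_sq, norm_sub_sq_real]

theorem sos_head {a : ℝ} (ha : a ≠ 0) (T s : ℝ) (u v : E) :
    ‖u‖ ^ 2 / T ^ 2 + 2 * (a / (T * s) * ⟪a⁻¹ • (u - v), -v⟫)
      + (s⁻¹ ^ 2 - 2 / (T * s)) * ‖v‖ ^ 2 = ‖T⁻¹ • u - s⁻¹ • v‖ ^ 2 := by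
  rw [real_inner_smul_sub_neg, norm_smul_sub_smul_sq_real]
  linear_combination 2 * (‖v‖ ^ 2 - ⟪u, v⟫) / (T * s) * mul_inv_cancel₀ ha

theorem sos_step {p a t s T : ℝ} (hp : 0 ≤ p) (ha : 0 < a) (ht : 0 < t) (hs : s = a + t)
    (hT : T = p + s) (u v : E) :
    2 * (p / (T * s) * ⟪a⁻¹ • (u - v), u - v⟫ + a / (s * t) * ⟪a⁻¹ • (u - v), -v⟫)
      = (a * T + 2 * p * t) / (T * a) * ‖s⁻¹ • u - t⁻¹ • v‖ ^ 2
        + (s⁻¹ ^ 2 - 2 / (T * s)) * ‖u‖ ^ 2 - (t⁻¹ ^ 2 - 2 / (T * t)) * ‖v‖ ^ 2 := by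
  subst hs hT
  have : 0 < a + t := by positivity
  have : 0 < p + (a + t) := by positivity
  rw [real_inner_smul_sub_neg, real_inner_smul_sub_sub, norm_smul_sub_smul_sq_real]
  field_simp
  ring

theorem sos_tail {p a T : ℝ} (ha : a ≠ 0) (hT : T ≠ 0) (hpa : T = p + a) (u v : E) :
    -‖a⁻¹ • (u - v)‖ ^ 2 + 2 * (a - p) / (T * a) * ⟪a⁻¹ • (u - v), -v⟫
      + 2 * (p / (T * a) * ⟪a⁻¹ • (u - v), u - v⟫) - (a⁻¹ ^ 2 - 2 / (T * a)) * ‖u‖ ^ 2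
      = (a - p) / (T * a ^ 2) * ‖v‖ ^ 2 := by
  obtain rfl : p = T - a := by linarith
  rw [real_inner_smul_sub_neg, real_inner_smul_sub_sub, norm_smul_sub_sq_real]
  field_simp
  ring

end InnerProductIdentities

theorem mul_sum_Icc_add_eq_of_telescoping {R : Type*} [CommRing R] (c : R) (f g d h : ℕ → R)
    (m : ℕ) (hstep : ∀ i ∈ Icc 1 m, c * (g i + f (i + 1)) = d i + h i - h (i + 1)) :
    c * ∑ i ∈ Icc 1 (m + 1), (f i + g i)
      = c * f 1 + h 1 + ∑ i ∈ Icc 1 m, d i - h (m + 1) + c * g (m + 1) := by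
  induction m with
  | zero => simp [mul_add]
  | succ m ih =>
    rw [sum_Icc_succ_top (by omega), mul_add, ih fun i hi ↦ hstep i (by simp at hi ⊢; omega),
      sum_Icc_succ_top (by omega)]
    linear_combination hstep (m + 1) (by simp)

section IntervalSum

def intervalSum (α : ℕ → ℝ) (i j : ℕ) : ℝ := ∑ k ∈ Icc i j, α k

variable {α : ℕ → ℝ} {i j k N : ℕ}

@[simp]
theorem intervalSum_self (α : ℕ → ℝ) (i : ℕ) : intervalSum α i i = α i := by
  rw [intervalSum, Icc_self, sum_singleton]

theorem intervalSum_split (hij : i ≤ j + 1) (hjk : j ≤ k) :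
    intervalSum α i k = intervalSum α i j + intervalSum α (j + 1) k := by
  simp only [intervalSum, ← Ico_add_one_right_eq_Icc]
  exact (sum_Ico_consecutive α hij (by omega)).symm

theorem intervalSum_eq_add (hik : i ≤ k) : intervalSum α i k = α i + intervalSum α (i + 1) k := by
  rw [intervalSum_split (j := i) (by omega) hik, intervalSum_self]

theorem intervalSum_pos (hα : ∀ k ∈ Icc 1 N, 0 < α k) (hi : 1 ≤ i) (hij : i ≤ j) (hj : j ≤ N) :
    0 < intervalSum α i j :=
  sum_pos (fun k hk ↦ hα k (Icc_subset_Icc hi hj hk)) (nonempty_Icc.2 hij)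

end IntervalSum

/-- Sum-of-squares certificate for the case `s = N` (i.e. `α_{1:N-1} ≤ α_N`):
the aggregated quantity equals an explicit nonnegative combination of squared
norms; in particular it is nonnegative. -/
theorem stmt10 {n : ℕ} (N : ℕ) (hN : 2 ≤ N) (α : ℕ → ℝ)
    (hα : ∀ i ∈ Finset.Icc 1 N, 0 < α i)
    (S : ℕ → ℕ → ℝ) (hS : ∀ i j, S i j = ∑ k ∈ Finset.Icc i j, α k)
    (hsep : S 1 (N - 1) ≤ α N)
    (x : ℕ → EuclideanSpace ℝ (Fin n)) :
    (-‖(α N)⁻¹ • (x (N - 1) - x N)‖ ^ 2 + ‖x 0‖ ^ 2 / (S 1 N) ^ 2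
      + 2 * (α N - S 1 (N - 1)) / (S 1 N * α N) *
          ⟪(α N)⁻¹ • (x (N - 1) - x N), -(x N)⟫
      + 2 * ∑ i ∈ Finset.Icc 1 (N - 1),
          (α i / (S i N * S (i + 1) N) * ⟪(α i)⁻¹ • (x (i - 1) - x i), -(x i)⟫
            + S 1 i / (S 1 N * S (i + 1) N) *
              ⟪(α (i + 1))⁻¹ • (x i - x (i + 1)), x i - x (i + 1)⟫)
      =
      ‖(S 1 N)⁻¹ • x 0 - (S 2 N)⁻¹ • x 1‖ ^ 2
        + ∑ i ∈ Finset.Icc 1 (N - 2),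
            (α (i + 1) * S 1 N + 2 * S 1 i * S (i + 2) N) / (S 1 N * α (i + 1)) *
              ‖(S (i + 1) N)⁻¹ • x i - (S (i + 2) N)⁻¹ • x (i + 1)‖ ^ 2
        + (α N - S 1 (N - 1)) / (S 1 N * (α N) ^ 2) * ‖x N‖ ^ 2) ∧
    0 ≤ -‖(α N)⁻¹ • (x (N - 1) - x N)‖ ^ 2 + ‖x 0‖ ^ 2 / (S 1 N) ^ 2
      + 2 * (α N - S 1 (N - 1)) / (S 1 N * α N) *
          ⟪(α N)⁻¹ • (x (N - 1) - x N), -(x N)⟫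
      + 2 * ∑ i ∈ Finset.Icc 1 (N - 1),
          (α i / (S i N * S (i + 1) N) * ⟪(α i)⁻¹ • (x (i - 1) - x i), -(x i)⟫
            + S 1 i / (S 1 N * S (i + 1) N) *
              ⟪(α (i + 1))⁻¹ • (x i - x (i + 1)), x i - x (i + 1)⟫) := by
  obtain rfl : S = intervalSum α := funext₂ hS
  obtain ⟨m, rfl⟩ : ∃ m, N = m + 2 := ⟨N - 2, by omega⟩
  simp only [show m + 2 - 1 = m + 1 by omega, show m + 2 - 2 = m by omega] at hsep ⊢
  have hα' (i : ℕ) (h1 : 1 ≤ i) (h2 : i ≤ m + 2) : 0 < α i := hα i (mem_Icc.2 ⟨h1, h2⟩)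
  have hT : 0 < intervalSum α 1 (m + 2) := intervalSum_pos hα le_rfl (by omega) le_rfl
  refine (fun key ↦ ⟨key, key ▸ ?_⟩) ?_
  · rw [mul_sum_Icc_add_eq_of_telescoping]
    case hstep =>
      intro i hi
      obtain ⟨hi1, him⟩ := mem_Icc.1 hi
      exact sos_step (intervalSum_pos hα le_rfl hi1 (by omega)).le
        (hα' (i + 1) (by omega) (by omega)) (intervalSum_pos hα (by omega) (by omega) le_rfl)
        (intervalSum_eq_add (by omega)) (intervalSum_split (by omega) (by omega)) (x i) (x (i + 1))
    simp only [Nat.reduceAdd, Nat.sub_self, intervalSum_self]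
    linear_combination sos_head (hα' 1 le_rfl (by omega)).ne' _ _ (x 0) (x 1)
      + sos_tail (hα' (m + 2) (by omega) le_rfl).ne' hT.ne'
        (by rw [intervalSum_split (j := m + 1) (by omega) (by omega), intervalSum_self])
        (x (m + 1)) (x (m + 2))
  refine add_nonneg (add_nonneg (sq_nonneg _) (sum_nonneg fun i hi ↦ ?_))
    (mul_nonneg (div_nonneg (sub_nonneg.2 hsep) (by positivity)) (sq_nonneg _))
  obtain ⟨hi1, him⟩ := mem_Icc.1 hi
  have : 0 < α (i + 1) := hα' (i + 1) (by omega) (by omega)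
  have : 0 < intervalSum α 1 i := intervalSum_pos hα le_rfl hi1 (by omega)
  have : 0 < intervalSum α (i + 2) (m + 2) := intervalSum_pos hα (by omega) (by omega) le_rfl
  positivity
end

section
/- Let f be a proper closed convex function on ℝⁿ with minimizer 0, f(0) = 0, ‖x_0‖ ≤ 1, and let x_i = prox_{α_i f}(x_{i−1}) for positive step sizes α_i with subgradients g_i = (x_{i−1} − x_i)/α_i ∈ ∂f(x_i) and values f_i = f(x_i). Let s be the separator of (α_i). Then multiplying the interpolation inequalities (f_N ≥ 0; 0 ≥ f_i + ⟨g_i, −x_i⟩ for i ≤ s; f_i ≥ f_{i+1} + ⟨g_{i+1}, x_i − x_{i+1}⟩ for i ≤ N−1; f_{i+1} ≥ f_i + ⟨g_i, x_{i+1} − x_i⟩ for s ≤ i ≤ N−1; ‖x_0‖² ≤ 1) by the multipliers 2/α_{1:N}, 2α_i/(α_{i:N}α_{i+1:N}) (i < s), 2(α_{s:N}−α_{1:s−1})/(α_{1:N}α_{s:N}) (i = s), 2α_{1:i}/(α_{1:N}α_{i+1:N}) (i < s), 2(α_{1:i}−α_{i+2:N})/(α_{1:N}α_{i+1}) (s ≤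 i ≤ N−1), 2(α_{1:i}−α_{i+1:N})/(α_{1:N}α_{i+1}) (s ≤ i ≤ N−1), and 1/α_{1:N}² respectively, and summing, all function values f_i cancel and one obtains ‖g_N‖² ≤ 1/α_{1:N}². -/
open scoped RealInnerProductSpace

/-!
A prox step `x_i = prox_{α_i f}(x_{i-1})` makes `g_i = (x_{i-1} - x_i)/α_i` a subgradient of `f`
at `x_i`, so the interpolation inequalities hold. Partial sums of the certificate are carried
along as an invariant: writing `B = α_{1:m}` and `A = α_{m+1:N}`, one has
`(A - B)(A + B)‖x_m‖² + 2AB(A + B) f(x_m) ≤ A²` for every `m`, and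
`(B - A)(A + B)‖g_m‖² + 2(A + B) f(x_m) ≤ 1` for `m ≥ s`. Each passage from `m` to `m + 1` is a
nonnegative combination of interpolation inequalities and of one square, `‖x_{m+1} - A g_{m+1}‖²`
or `‖g_m - g_{m+1}‖²`; the two separator inequalities are exactly what keeps the multipliers
nonnegative at the switch `m = s` and after it. At `m = N` the second invariant reads
`α_{1:N}² ‖g_N‖² + 2 α_{1:N} f(x_N) ≤ 1`, and `f ≥ 0` finishes.
-/

open Finset

section

variable {E : Type*} [NormedAddCommGroup E] [InnerProductSpace ℝ E]

def HasSubgradientAt (f : E → ℝ) (g x : E) : Prop := ∀ z, f x + ⟪g, z - x⟫ ≤ f z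

open Filter Topology in
theorem IsMinOn.hasSubgradientAt_of_prox {f : E → ℝ} {c : ℝ} {y w : E}
    (hf : ConvexOn ℝ Set.univ f) (hc : 0 < c)
    (hw : IsMinOn (fun z => c * f z + ‖z - y‖ ^ 2 / 2) Set.univ w) :
    HasSubgradientAt f (c⁻¹ • (y - w)) w := by
  intro z
  set D := c * (f z - f w) - ⟪y - w, z - w⟫
  set K := ‖z - w‖ ^ 2 / 2
  have hD : ∀ t ∈ Set.Ioc (0 : ℝ) 1, 0 ≤ D + t * K := by
    rintro t ⟨ht0, ht1⟩
    have hmin := isMinOn_iff.1 hw ((1 - t) • w + t • z) (Set.mem_univ _)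
    have hconv :=
      hf.2 (Set.mem_univ w) (Set.mem_univ z) (sub_nonneg.2 ht1) ht0.le (sub_add_cancel 1 t)
    have hexp : (1 - t) • w + t • z - y = -((y - w) - t • (z - w)) := by module
    rw [norm_sub_rev w y, hexp, norm_neg, norm_sub_sq_real (y - w), inner_smul_right, norm_smul,
      Real.norm_eq_abs, mul_pow, sq_abs] at hmin
    rw [smul_eq_mul, smul_eq_mul] at hconv
    have : 0 ≤ t * (D + t * K) := by linear_combination hmin + c * hconv
    exact nonneg_of_mul_nonneg_right this ht0
  have hD0 : 0 ≤ D := by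
    refine ge_of_tendsto (x := 𝓝[>] 0) ?_ (eventually_of_mem (Ioc_mem_nhdsGT one_pos) hD)
    have hlim : Tendsto (fun t : ℝ => D + t * K) (𝓝 0) (𝓝 (D + 0 * K)) :=
      tendsto_const_nhds.add (tendsto_id.mul_const K)
    rw [zero_mul, add_zero] at hlim
    exact tendsto_nhdsWithin_of_tendsto_nhds hlim
  rw [real_inner_smul_left]
  have := (inv_mul_le_iff₀ hc).2 (show ⟪y - w, z - w⟫ ≤ c * (f z - f w) by linarith)
  linarith

theorem HasSubgradientAt.add_mul_inner_le {f : E → ℝ} {g x : E} (hg : HasSubgradientAt f g x)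
    (a : ℝ) (v : E) : f x + a * ⟪g, v⟫ ≤ f (x + a • v) := by
  simpa [inner_smul_right] using hg (x + a • v)

theorem HasSubgradientAt.le_inner_of_map_zero {f : E → ℝ} {g x : E}
    (hg : HasSubgradientAt f g x) (hf0 : f 0 = 0) : f x ≤ ⟪g, x⟫ := by
  simpa [inner_neg_right, hf0] using hg 0

def iteratePotential (f : E → ℝ) (B A : ℝ) (x : E) : ℝ :=
  (A - B) * (B + A) * ‖x‖ ^ 2 + 2 * B * A * (B + A) * f x

def subgradPotential (f : E → ℝ) (B A : ℝ) (x g : E) : ℝ :=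
  (B - A) * (B + A) * ‖g‖ ^ 2 + 2 * (B + A) * f x

variable {f : E → ℝ} {x g g' : E} {a A B : ℝ}

theorem iteratePotential_step (hf0 : f 0 = 0) (hg : HasSubgradientAt f g x)
    (ha : 0 < a) (hA : 0 ≤ A) (hB : 0 ≤ B)
    (h : iteratePotential f B (a + A) (x + a • g) ≤ (a + A) ^ 2) :
    iteratePotential f (B + a) A x ≤ A ^ 2 := by
  have hzero := hg.le_inner_of_map_zero hf0
  have hdesc := hg.add_mul_inner_le a g
  have hsq : 0 ≤ ‖x - A • g‖ ^ 2 := sq_nonneg _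
  rw [real_inner_self_eq_norm_sq] at hdesc
  rw [norm_sub_sq_real, inner_smul_right, norm_smul, Real.norm_eq_abs, mul_pow, sq_abs] at hsq
  rw [iteratePotential, norm_add_sq_real, inner_smul_right, norm_smul, Real.norm_eq_abs, mul_pow,
    sq_abs] at h
  rw [real_inner_comm] at hzero
  have : (a + A) ^ 2 * iteratePotential f (B + a) A x ≤ (a + A) ^ 2 * A ^ 2 := by
    rw [iteratePotential]
    linear_combination A ^ 2 * h + 2 * a * (B + a + A) ^ 2 * (a + A) * A * hzero
      + 2 * B * (B + a + A) * (a + A) * A ^ 2 * hdesc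
      + a * (B + a + A) * ((B + a + A) * a + 2 * B * A) * hsq
  exact le_of_mul_le_mul_left this (by positivity)

theorem subgradPotential_of_iteratePotential (hf0 : f 0 = 0) (hg : HasSubgradientAt f g x)
    (ha : 0 < a) (hA : 0 ≤ A) (hB : 0 ≤ B) (hBA : B ≤ a + A)
    (h : iteratePotential f B (a + A) (x + a • g) ≤ (a + A) ^ 2) :
    subgradPotential f (B + a) A x g ≤ 1 := by
  have hzero := hg.le_inner_of_map_zero hf0
  have hdesc := hg.add_mul_inner_le a g
  have hsq : 0 ≤ ‖x - A • g‖ ^ 2 := sq_nonneg _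
  rw [real_inner_self_eq_norm_sq] at hdesc
  rw [norm_sub_sq_real, inner_smul_right, norm_smul, Real.norm_eq_abs, mul_pow, sq_abs] at hsq
  rw [iteratePotential, norm_add_sq_real, inner_smul_right, norm_smul, Real.norm_eq_abs, mul_pow,
    sq_abs] at h
  rw [real_inner_comm] at hzero
  have hd : 0 ≤ a + A - B := by linarith
  have : (a + A) ^ 2 * subgradPotential f (B + a) A x g ≤ (a + A) ^ 2 * 1 := by
    rw [subgradPotential]
    linear_combination h + 2 * (a + A) * (B + a + A) * mul_nonneg hd (sub_nonneg.2 hzero)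
      + 2 * B * (a + A) * (B + a + A) * hdesc + (B + a + A) * mul_nonneg hd hsq
  exact le_of_mul_le_mul_left this (by positivity)

theorem subgradPotential_step (hg : HasSubgradientAt f g (x + a • g'))
    (hg' : HasSubgradientAt f g' x) (ha : 0 < a) (hA : 0 ≤ A) (hAB : a + A ≤ B)
    (h : subgradPotential f B (a + A) (x + a • g') g ≤ 1) :
    subgradPotential f (B + a) A x g' ≤ 1 := by
  have hdesc := hg'.add_mul_inner_le a g'
  have hback := hg.add_mul_inner_le (-a) g'
  have hsq : 0 ≤ ‖g - g'‖ ^ 2 := sq_nonneg _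
  rw [real_inner_self_eq_norm_sq] at hdesc
  rw [neg_smul, add_neg_cancel_right] at hback
  rw [norm_sub_sq_real] at hsq
  rw [subgradPotential] at h
  have hd : 0 ≤ B - (a + A) := by linarith
  have hd' : 0 ≤ B - A := by linarith
  have hB : 0 ≤ B := by linarith
  have : a * subgradPotential f (B + a) A x g' ≤ a * 1 := by
    rw [subgradPotential]
    linear_combination a * h + 2 * (B + a + A) * mul_nonneg hd' (sub_nonneg.2 hdesc)
      + 2 * (B + a + A) * mul_nonneg hd (sub_nonneg.2 hback) + a * (B + a + A) * mul_nonneg hd hsq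
  exact le_of_mul_le_mul_left this ha

end

theorem Finset.sum_Icc_eq_add_sum_Icc_add_one {M : Type*} [AddCommMonoid M] (u : ℕ → M)
    {a b : ℕ} (h : a ≤ b) : ∑ k ∈ Icc a b, u k = u a + ∑ k ∈ Icc (a + 1) b, u k := by
  rw [Icc_add_one_left_eq_Ioc, add_sum_Ioc_eq_sum_Icc h]

section

variable {E : Type*} [NormedAddCommGroup E] [InnerProductSpace ℝ E]
  {f : E → ℝ} {α : ℕ → ℝ} {x g : ℕ → E} {N : ℕ}

theorem iteratePotential_le (hf0 : f 0 = 0) (hα : ∀ i ∈ Icc 1 N, 0 < α i)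
    (hx : ∀ i ∈ Icc 1 N, x (i - 1) = x i + α i • g i)
    (hg : ∀ i ∈ Icc 1 N, HasSubgradientAt f (g i) (x i)) (hx0 : ‖x 0‖ ≤ 1) :
    ∀ m ≤ N, iteratePotential f (∑ k ∈ Icc 1 m, α k) (∑ k ∈ Icc (m + 1) N, α k) (x m)
      ≤ (∑ k ∈ Icc (m + 1) N, α k) ^ 2 := by
  have hA : ∀ m, 0 ≤ ∑ k ∈ Icc (m + 1) N, α k := fun m =>
    sum_nonneg fun k hk => (hα k (Icc_subset_Icc (by omega) le_rfl hk)).le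
  intro m hm
  induction m with
  | zero =>
    have hx0' : ‖x 0‖ ^ 2 ≤ 1 := pow_le_one₀ (norm_nonneg _) hx0
    rw [iteratePotential, Icc_eq_empty_of_lt zero_lt_one, sum_empty]
    linear_combination (∑ k ∈ Icc (0 + 1) N, α k) ^ 2 * hx0'
  | succ m ih =>
    have hm1 : m + 1 ∈ Icc 1 N := mem_Icc.2 ⟨by omega, hm⟩
    have h := ih (by omega)
    have hxm : x m = x (m + 1) + α (m + 1) • g (m + 1) := hx (m + 1) hm1
    rw [sum_Icc_eq_add_sum_Icc_add_one α hm, hxm] at h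
    rw [sum_Icc_succ_top (by omega)]
    exact iteratePotential_step hf0 (hg _ hm1) (hα _ hm1) (hA _)
      (sum_nonneg fun k hk => (hα k (Icc_subset_Icc le_rfl (by omega) hk)).le) h

theorem subgradPotential_le (hf0 : f 0 = 0) (hα : ∀ i ∈ Icc 1 N, 0 < α i)
    (hx : ∀ i ∈ Icc 1 N, x (i - 1) = x i + α i • g i)
    (hg : ∀ i ∈ Icc 1 N, HasSubgradientAt f (g i) (x i)) (hx0 : ‖x 0‖ ≤ 1)
    {s : ℕ} (hs1 : 1 ≤ s) (hsN : s ≤ N)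
    (hsep1 : ∑ k ∈ Icc (s + 1) N, α k ≤ ∑ k ∈ Icc 1 s, α k)
    (hsep2 : ∑ k ∈ Icc 1 (s - 1), α k ≤ ∑ k ∈ Icc s N, α k) :
    ∀ j, s ≤ j → j ≤ N → subgradPotential f (∑ k ∈ Icc 1 j, α k) (∑ k ∈ Icc (j + 1) N, α k)
      (x j) (g j) ≤ 1 := by
  have hpos : ∀ {a b}, 1 ≤ a → b ≤ N → ∀ k ∈ Icc a b, 0 ≤ α k := fun ha hb k hk =>
    (hα k (Icc_subset_Icc ha hb hk)).le
  have hA : ∀ m, 0 ≤ ∑ k ∈ Icc (m + 1) N, α k := fun m => sum_nonneg (hpos (by omega) le_rfl)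
  intro j hsj
  induction j, hsj using Nat.le_induction with
  | base =>
    intro _
    obtain ⟨t, rfl⟩ : ∃ t, s = t + 1 := ⟨s - 1, by omega⟩
    have hs : t + 1 ∈ Icc 1 N := mem_Icc.2 ⟨hs1, hsN⟩
    have hxt : x t = x (t + 1) + α (t + 1) • g (t + 1) := hx (t + 1) hs
    have h := iteratePotential_le hf0 hα hx hg hx0 t (by omega)
    rw [sum_Icc_eq_add_sum_Icc_add_one α hsN] at h hsep2
    rw [hxt] at h
    rw [sum_Icc_succ_top (by omega)]
    exact subgradPotential_of_iteratePotential hf0 (hg _ hs) (hα _ hs) (hA _)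
      (sum_nonneg (hpos le_rfl (by omega))) hsep2 h
  | succ j hsj ih =>
    intro hj
    have hj1 : j + 1 ∈ Icc 1 N := mem_Icc.2 ⟨by omega, hj⟩
    have hxj : x j = x (j + 1) + α (j + 1) • g (j + 1) := hx (j + 1) hj1
    have hAB : ∑ k ∈ Icc (j + 1) N, α k ≤ ∑ k ∈ Icc 1 j, α k :=
      calc ∑ k ∈ Icc (j + 1) N, α k
          ≤ ∑ k ∈ Icc (s + 1) N, α k :=
            sum_le_sum_of_subset_of_nonneg (Icc_subset_Icc (by omega) le_rfl)
              fun k hk _ => hpos (by omega) le_rfl k hk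
        _ ≤ ∑ k ∈ Icc 1 s, α k := hsep1
        _ ≤ ∑ k ∈ Icc 1 j, α k :=
            sum_le_sum_of_subset_of_nonneg (Icc_subset_Icc le_rfl hsj)
              fun k hk _ => hpos le_rfl (by omega) k hk
    have h := ih (by omega)
    rw [sum_Icc_eq_add_sum_Icc_add_one α hj] at h hAB
    rw [hxj] at h
    rw [sum_Icc_succ_top (by omega)]
    exact subgradPotential_step (hxj ▸ hg j (mem_Icc.2 ⟨by omega, by omega⟩)) (hg _ hj1)
      (hα _ hj1) (hA _) hAB h

end

theorem stmt12_general {n : ℕ} (f : EuclideanSpace ℝ (Fin n) → ℝ)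
    (hconv : ConvexOn ℝ Set.univ f)
    (hmin : ∀ z, f 0 ≤ f z) (h0 : f 0 = 0)
    (N s : ℕ) (α : ℕ → ℝ) (hα : ∀ i ∈ Finset.Icc 1 N, 0 < α i)
    (hs1 : 1 ≤ s) (hsN : s ≤ N)
    (hsep1 : (∑ k ∈ Finset.Icc (s + 1) N, α k) < (∑ k ∈ Finset.Icc 1 s, α k))
    (hsep2 : (∑ k ∈ Finset.Icc 1 (s - 1), α k) ≤ (∑ k ∈ Finset.Icc s N, α k))
    (x : ℕ → EuclideanSpace ℝ (Fin n)) (hx0 : ‖x 0‖ ≤ 1)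
    (hiter : ∀ i ∈ Finset.Icc 1 N,
      IsMinOn (fun z => α i * f z + ‖z - x (i - 1)‖ ^ 2 / 2) Set.univ (x i)) :
    ‖(α N)⁻¹ • (x (N - 1) - x N)‖ ^ 2 ≤ 1 / (∑ k ∈ Finset.Icc 1 N, α k) ^ 2 := by
  set g : ℕ → EuclideanSpace ℝ (Fin n) := fun i => (α i)⁻¹ • (x (i - 1) - x i)
  have hx : ∀ i ∈ Icc 1 N, x (i - 1) = x i + α i • g i := fun i hi => by
    simp [g, smul_smul, mul_inv_cancel₀ (hα i hi).ne']
  have hg : ∀ i ∈ Icc 1 N, HasSubgradientAt f (g i) (x i) := fun i hi =>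
    (hiter i hi).hasSubgradientAt_of_prox hconv (hα i hi)
  have hpot := subgradPotential_le h0 hα hx hg hx0 hs1 hsN hsep1.le hsep2 N hsN le_rfl
  rw [subgradPotential, Icc_eq_empty_of_lt (Nat.lt_succ_self N), sum_empty] at hpot
  have hT : 0 < ∑ k ∈ Icc 1 N, α k := sum_pos hα ⟨N, mem_Icc.2 ⟨by omega, le_rfl⟩⟩
  have hfN : 0 ≤ f (x N) := h0 ▸ hmin (x N)
  rw [le_div_iff₀ (by positivity)]
  nlinarith

/-- The aggregated dual certificate: for the PPA on a proper closed convex `f`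
with minimizer `0`, `f(0) = 0` and `‖x_0‖ ≤ 1`, combining the interpolation
inequalities with the (separator-dependent) nonnegative multipliers yields
`‖g_N‖² ≤ 1/α_{1:N}²`. -/
theorem stmt12 {n : ℕ} (f : EuclideanSpace ℝ (Fin n) → ℝ)
    (hconv : ConvexOn ℝ Set.univ f) (hlsc : LowerSemicontinuous f)
    (hmin : ∀ z, f 0 ≤ f z) (h0 : f 0 = 0)
    (N s : ℕ) (hN : 1 ≤ N) (α : ℕ → ℝ) (hα : ∀ i ∈ Finset.Icc 1 N, 0 < α i)
    (hs1 : 1 ≤ s) (hsN : s ≤ N)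
    (hsep1 : (∑ k ∈ Finset.Icc (s + 1) N, α k) < (∑ k ∈ Finset.Icc 1 s, α k))
    (hsep2 : (∑ k ∈ Finset.Icc 1 (s - 1), α k) ≤ (∑ k ∈ Finset.Icc s N, α k))
    (x : ℕ → EuclideanSpace ℝ (Fin n)) (hx0 : ‖x 0‖ ≤ 1)
    (hiter : ∀ i ∈ Finset.Icc 1 N,
      IsMinOn (fun z => α i * f z + ‖z - x (i - 1)‖ ^ 2 / 2) Set.univ (x i)) :
    ‖(α N)⁻¹ • (x (N - 1) - x N)‖ ^ 2 ≤ 1 / (∑ k ∈ Finset.Icc 1 N, α k) ^ 2 :=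
  stmt12_general f hconv hmin h0 N s α hα hs1 hsN hsep1 hsep2 x hx0 hiter
end

section
/- Let f be a proper closed convex function on ℝ, let α > 0 and c > 0, and suppose f(x) = c|x|. Then for any x ∈ ℝ, prox_{αf}(x) equals x − αc if x > αc, equals x + αc if x < −αc, and equals 0 if |x| ≤ αc (soft-thresholding). Consequently, starting from x_0 = −R with c = R/α_{1:N}, the PPA iterates are x_i = −R α_{i+1:N}/α_{1:N}. -/
/-!
The objective `z ↦ t|z| + (z - x)²/2` is `1`-strongly convex, so a point `p` with
`t|p| + (p - x)²/2 + (z - p)²/2 ≤ t|z| + (z - x)²/2` for all `z` is its only minimiser; the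
soft-thresholded point satisfies this because `x - p` is a subgradient of `t|·|` at `p`.
For the iteration, `x_{i-1} = -(α_i c + c α_{i+1:N})` lies at or below `-α_i c`, so each prox
step adds `α_i c` (or lands exactly on `0` when `α_{i+1:N} = 0`), giving `x_i = -c α_{i+1:N}`.
-/

open Finset

theorem IsMinOn.eq_of_forall_add_sq_le {g : ℝ → ℝ} {p y : ℝ} (hy : IsMinOn g Set.univ y)
    (hp : ∀ z, g p + (z - p) ^ 2 / 2 ≤ g z) : y = p := by
  have hyp : g y ≤ g p := isMinOn_iff.mp hy p (Set.mem_univ p)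
  nlinarith [hp y, sq_nonneg (y - p)]

noncomputable def softThreshold (t x : ℝ) : ℝ :=
  if t < x then x - t else if x < -t then x + t else 0

section SoftThreshold

variable {t x : ℝ}

theorem softThreshold_of_lt (h : t < x) : softThreshold t x = x - t := if_pos h

theorem softThreshold_of_lt_neg (ht : 0 ≤ t) (h : x < -t) : softThreshold t x = x + t := by
  rw [softThreshold, if_neg (by linarith), if_pos h]

theorem softThreshold_of_abs_le (h : |x| ≤ t) : softThreshold t x = 0 := by
  obtain ⟨hl, hr⟩ := abs_le.mp h
  rw [softThreshold, if_neg (not_lt.mpr hr), if_neg (not_lt.mpr hl)]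

theorem softThreshold_neg_add (ht : 0 ≤ t) {s : ℝ} (hs : 0 ≤ s) :
    softThreshold t (-(t + s)) = -s := by
  rcases hs.lt_or_eq with hs | rfl
  · rw [softThreshold_of_lt_neg ht (by linarith)]
    ring
  · rw [softThreshold_of_abs_le (by rw [add_zero, abs_neg, abs_of_nonneg ht]), neg_zero]

theorem softThreshold_add_sq_le (ht : 0 ≤ t) (x z : ℝ) :
    t * |softThreshold t x| + (softThreshold t x - x) ^ 2 / 2 + (z - softThreshold t x) ^ 2 / 2
      ≤ t * |z| + (z - x) ^ 2 / 2 := by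
  have hz : z ≤ |z| ∧ -z ≤ |z| := ⟨le_abs_self z, neg_le_abs z⟩
  unfold softThreshold
  split_ifs with h₁ h₂
  · rw [abs_of_pos (by linarith : 0 < x - t)]
    nlinarith
  · rw [abs_of_neg (by linarith : x + t < 0)]
    nlinarith
  · rw [abs_zero]
    nlinarith [not_lt.mp h₁, not_lt.mp h₂]

theorem IsMinOn.eq_softThreshold (ht : 0 ≤ t) {y : ℝ}
    (hy : IsMinOn (fun z => t * |z| + (z - x) ^ 2 / 2) Set.univ y) : y = softThreshold t x :=
  hy.eq_of_forall_add_sq_le fun z => by linarith [softThreshold_add_sq_le ht x z]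

end SoftThreshold

theorem proxAbs_iterate_eq {c : ℝ} (hc : 0 ≤ c) {N : ℕ} {a : ℕ → ℝ}
    (ha : ∀ i ∈ Icc 1 N, 0 ≤ a i) {x : ℕ → ℝ} (hx₀ : x 0 = -(c * ∑ k ∈ Icc 1 N, a k))
    (hx : ∀ i ∈ Icc 1 N,
      IsMinOn (fun z => a i * (c * |z|) + (z - x (i - 1)) ^ 2 / 2) Set.univ (x i)) :
    ∀ i ≤ N, x i = -(c * ∑ k ∈ Icc (i + 1) N, a k) := by
  intro i
  induction i with
  | zero => simpa using hx₀
  | succ i ih =>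
    intro hiN
    have hi : i + 1 ∈ Icc 1 N := mem_Icc.mpr ⟨by omega, hiN⟩
    have htail : 0 ≤ ∑ k ∈ Icc (i + 1 + 1) N, a k :=
      sum_nonneg fun k hk => ha k (mem_Icc.mpr ⟨by grind, (mem_Icc.mp hk).2⟩)
    have hprev : x i = -(a (i + 1) * c + c * ∑ k ∈ Icc (i + 1 + 1) N, a k) := by
      rw [ih (by omega), ← add_sum_Ioc_eq_sum_Icc hiN, ← Icc_add_one_left_eq_Ioc]
      ring
    have hstep := hx (i + 1) hi
    simp only [add_tsub_cancel_right, hprev, ← mul_assoc] at hstep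
    rw [hstep.eq_softThreshold (mul_nonneg (ha _ hi) hc),
      softThreshold_neg_add (mul_nonneg (ha _ hi) hc) (mul_nonneg hc htail)]

/-- Soft-thresholding: the proximal mapping of `f(x) = c|x|` with step `α`
is `x - αc` if `x > αc`, `x + αc` if `x < -αc`, and `0` if `|x| ≤ αc`.
Consequently, starting from `x_0 = -R` with `c = R/α_{1:N}`, the PPA iterates
are `x_i = -R α_{i+1:N}/α_{1:N}`. -/
theorem stmt16 (α c : ℝ) (hα : 0 < α) (hc : 0 < c)
    (f : ℝ → ℝ) (hf : ∀ y, f y = c * |y|) :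
    (∀ x y, IsMinOn (fun z => α * f z + (z - x) ^ 2 / 2) Set.univ y →
      (α * c < x → y = x - α * c) ∧
      (x < -(α * c) → y = x + α * c) ∧
      (|x| ≤ α * c → y = 0)) ∧
    (∀ (N : ℕ), 1 ≤ N → ∀ αs : ℕ → ℝ, (∀ i ∈ Finset.Icc 1 N, 0 < αs i) →
      ∀ R : ℝ, 0 < R → c = R / ∑ k ∈ Finset.Icc 1 N, αs k →
      ∀ x : ℕ → ℝ, x 0 = -R →
      (∀ i ∈ Finset.Icc 1 N,
        IsMinOn (fun z => αs i * f z + (z - x (i - 1)) ^ 2 / 2) Set.univ (x i)) →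
      ∀ i ≤ N, x i = -R * (∑ k ∈ Finset.Icc (i + 1) N, αs k) /
          ∑ k ∈ Finset.Icc 1 N, αs k) := by
  obtain rfl : f = fun y => c * |y| := funext hf
  have hαc : 0 ≤ α * c := (mul_pos hα hc).le
  refine ⟨fun x y hy => ?_, fun N hN αs hαs R _ hcR x hx₀ hx i hi => ?_⟩
  · have hy' := IsMinOn.eq_softThreshold hαc (by simpa only [mul_assoc] using hy)
    exact ⟨fun h => hy'.trans (softThreshold_of_lt h),
      fun h => hy'.trans (softThreshold_of_lt_neg hαc h),
      fun h => hy'.trans (softThreshold_of_abs_le h)⟩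
  · have hS : ∑ k ∈ Icc 1 N, αs k ≠ 0 := (sum_pos hαs ⟨1, mem_Icc.mpr ⟨le_rfl, hN⟩⟩).ne'
    have hx₀' : x 0 = -(c * ∑ k ∈ Icc 1 N, αs k) := by rw [hx₀, hcR, div_mul_cancel₀ R hS]
    rw [proxAbs_iterate_eq hc.le (fun k hk => (hαs k hk).le) hx₀' hx i hi, hcR]
    ring
end
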